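/- Let U_[k], V_[k] be invertible k×k matrices and U', V' be (n−k)×k matrices, and let M′ be an invertible (n−k)×(n−k) matrix. Consider the n×n block matrix A = [[U_[k]V_[k]ᵀ, U_[k]V'ᵀ], [U'V_[k]ᵀ, M′ + U'V'ᵀ]]. Then the Schur complement of the top-left block satisfies (M′ + U'V'ᵀ) − U'V_[k]ᵀ (U_[k]V_[k]ᵀ)⁻¹ U_[k]V'ᵀ = M′, and consequently s_n(A)⁻¹ ≤ 1/(s_k(U_[k]) s_k(V_[k])) + (1/s_{n−k}(M′)) (1 + s₁(V')/s_k(V_[k])) (1 + s₁(U')/s_k(U_[k])). -/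

import Mathlib

open Matrix

/-- Operator (spectral) norm of a real matrix; for an invertible square matrix `B`,
`‖B⁻¹‖ = s_min(B)⁻¹` and `‖B‖ = s₁(B)`. -/
noncomputable def opNorm {m n : Type*} [Fintype m] [Fintype n] [DecidableEq n]
    (A : Matrix m n ℝ) : ℝ :=
  ‖LinearMap.toContinuousLinearMap (Matrix.toEuclideanLin A)‖

/-!
For a block matrix `[[B, C], [D, E]]` with Schur complement `S = E - D B⁻¹ C`, block
elimination gives `A⁻¹ = [[B⁻¹, 0], [0, 0]] + [-B⁻¹C; 1] S⁻¹ [-DB⁻¹, 1]`, and the spectral norm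
of a stacked matrix is at most the sum of the norms of its pieces because `[1; 0]` is an
isometry. For `B = Uk Vkᵀ` we have `B⁻¹ = Vk⁻ᵀ Uk⁻¹`, hence `B⁻¹C = Vk⁻ᵀ V'ᵀ` and
`DB⁻¹ = U' Uk⁻¹`; so `S = M'`, and submultiplicativity turns the general bound into the stated one.
-/

open scoped Matrix.Norms.L2Operator

namespace Matrix

section BlockInverse

variable {α : Type*} [CommRing α] {m n : Type*} [Fintype m] [Fintype n]
  [DecidableEq m] [DecidableEq n]

lemma inv_fromBlocks_eq_of_isUnit₁₁ {B : Matrix m m α} {C : Matrix m n α}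
    {D : Matrix n m α} {E : Matrix n n α} (hB : IsUnit B) (hS : IsUnit (E - D * B⁻¹ * C)) :
    (fromBlocks B C D E)⁻¹ = fromBlocks B⁻¹ 0 0 0 +
      fromRows (-(B⁻¹ * C)) (1 : Matrix n n α) * (E - D * B⁻¹ * C)⁻¹ *
        fromCols (-(D * B⁻¹)) (1 : Matrix n n α) := by
  refine inv_eq_left_inv ?_
  have hB' : B⁻¹ * B = 1 := nonsing_inv_mul _ ((isUnit_iff_isUnit_det B).mp hB)
  have hS' : (E - D * B⁻¹ * C)⁻¹ * (E - D * B⁻¹ * C) = 1 :=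
    nonsing_inv_mul _ ((isUnit_iff_isUnit_det _).mp hS)
  have hright : fromCols (-(D * B⁻¹)) (1 : Matrix n n α) * fromBlocks B C D E =
      fromCols 0 (E - D * B⁻¹ * C) := by
    rw [fromCols_mul_fromBlocks, Matrix.neg_mul, Matrix.mul_assoc, hB']
    simp only [Matrix.mul_one, Matrix.one_mul, neg_add_cancel, Matrix.neg_mul]
    rw [neg_add_eq_sub]
  rw [Matrix.add_mul, Matrix.mul_assoc, Matrix.mul_assoc, hright, mul_fromCols, hS',
    fromBlocks_multiply, fromRows_mul_fromCols, hB']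
  simp only [Matrix.mul_zero, Matrix.zero_mul, add_zero, Matrix.mul_one, fromBlocks_add]
  rw [add_neg_cancel, zero_add, fromBlocks_one]

end BlockInverse

section L2OpNorm

variable {𝕜 : Type*} [RCLike 𝕜] {m n p q : Type*} [Fintype m] [Fintype n] [Fintype p]
  [Fintype q]

lemma l2_opNorm_one_le [DecidableEq n] : ‖(1 : Matrix n n 𝕜)‖ ≤ 1 := by
  rw [← diagonal_one, l2_opNorm_diagonal]
  exact pi_norm_le_iff_of_nonneg zero_le_one |>.mpr fun _ => norm_one.le

lemma l2_opNorm_le_one_of_conjTranspose_mul_self_eq_one [DecidableEq n] {A : Matrix m n 𝕜}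
    (hA : Aᴴ * A = 1) : ‖A‖ ≤ 1 := by
  rw [← abs_norm, abs_le_one_iff_mul_self_le_one, ← l2_opNorm_conjTranspose_mul_self, hA]
  exact l2_opNorm_one_le

lemma l2_opNorm_fromRows_le [DecidableEq m] [DecidableEq n] [DecidableEq p]
    (A₁ : Matrix m p 𝕜) (A₂ : Matrix n p 𝕜) :
    ‖fromRows A₁ A₂‖ ≤ ‖A₁‖ + ‖A₂‖ := by
  have h₁ : ‖fromRows (1 : Matrix m m 𝕜) (0 : Matrix n m 𝕜)‖ ≤ 1 :=
    l2_opNorm_le_one_of_conjTranspose_mul_self_eq_one <| by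
      simp [conjTranspose_fromRows_eq_fromCols_conjTranspose, fromCols_mul_fromRows]
  have h₂ : ‖fromRows (0 : Matrix m n 𝕜) (1 : Matrix n n 𝕜)‖ ≤ 1 :=
    l2_opNorm_le_one_of_conjTranspose_mul_self_eq_one <| by
      simp [conjTranspose_fromRows_eq_fromCols_conjTranspose, fromCols_mul_fromRows]
  have hsplit : fromRows A₁ A₂ = fromRows (1 : Matrix m m 𝕜) (0 : Matrix n m 𝕜) * A₁ +
      fromRows (0 : Matrix m n 𝕜) (1 : Matrix n n 𝕜) * A₂ := by
    rw [fromRows_mul, fromRows_mul]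
    ext (i | i) j <;> simp
  calc ‖fromRows A₁ A₂‖
      ≤ ‖fromRows (1 : Matrix m m 𝕜) (0 : Matrix n m 𝕜)‖ * ‖A₁‖ +
        ‖fromRows (0 : Matrix m n 𝕜) (1 : Matrix n n 𝕜)‖ * ‖A₂‖ := by
        rw [hsplit]
        exact (norm_add_le _ _).trans (add_le_add (l2_opNorm_mul _ _) (l2_opNorm_mul _ _))
    _ ≤ 1 * ‖A₁‖ + 1 * ‖A₂‖ := by gcongr
    _ = ‖A₁‖ + ‖A₂‖ := by ring

lemma l2_opNorm_fromCols_le [DecidableEq m] [DecidableEq n] [DecidableEq p]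
    (A₁ : Matrix p m 𝕜) (A₂ : Matrix p n 𝕜) :
    ‖fromCols A₁ A₂‖ ≤ ‖A₁‖ + ‖A₂‖ := by
  rw [← l2_opNorm_conjTranspose, conjTranspose_fromCols_eq_fromRows_conjTranspose,
    ← l2_opNorm_conjTranspose A₁, ← l2_opNorm_conjTranspose A₂]
  exact l2_opNorm_fromRows_le _ _

lemma l2_opNorm_fromBlocks_le [DecidableEq m] [DecidableEq n] [DecidableEq p]
    [DecidableEq q] (A : Matrix p m 𝕜) (B : Matrix p n 𝕜) (C : Matrix q m 𝕜)
    (D : Matrix q n 𝕜) :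
    ‖fromBlocks A B C D‖ ≤ ‖A‖ + ‖B‖ + (‖C‖ + ‖D‖) := by
  rw [← fromRows_fromCols_eq_fromBlocks]
  exact (l2_opNorm_fromRows_le _ _).trans
    (add_le_add (l2_opNorm_fromCols_le _ _) (l2_opNorm_fromCols_le _ _))

lemma l2_opNorm_fromRows_neg_one_le [DecidableEq m] [DecidableEq n] (X : Matrix m n 𝕜) :
    ‖fromRows (-X) (1 : Matrix n n 𝕜)‖ ≤ ‖X‖ + 1 :=
  (l2_opNorm_fromRows_le _ _).trans <| by rw [norm_neg]; gcongr; exact l2_opNorm_one_le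

lemma l2_opNorm_fromCols_neg_one_le [DecidableEq m] [DecidableEq n] (X : Matrix m n 𝕜) :
    ‖fromCols (-X) (1 : Matrix m m 𝕜)‖ ≤ ‖X‖ + 1 :=
  (l2_opNorm_fromCols_le _ _).trans <| by rw [norm_neg]; gcongr; exact l2_opNorm_one_le

lemma l2_opNorm_inv_fromBlocks_le [DecidableEq m] [DecidableEq n] {B : Matrix m m 𝕜}
    {C : Matrix m n 𝕜} {D : Matrix n m 𝕜} {E : Matrix n n 𝕜} (hB : IsUnit B)
    (hS : IsUnit (E - D * B⁻¹ * C)) :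
    ‖(fromBlocks B C D E)⁻¹‖ ≤
      ‖B⁻¹‖ + ‖(E - D * B⁻¹ * C)⁻¹‖ * (1 + ‖B⁻¹ * C‖) * (1 + ‖D * B⁻¹‖) := by
  have hcorner : ‖fromBlocks B⁻¹ (0 : Matrix m n 𝕜) (0 : Matrix n m 𝕜) 0‖ ≤ ‖B⁻¹‖ := by
    simpa using l2_opNorm_fromBlocks_le B⁻¹ (0 : Matrix m n 𝕜) (0 : Matrix n m 𝕜) 0
  have hL := l2_opNorm_fromRows_neg_one_le (B⁻¹ * C)
  have hR := l2_opNorm_fromCols_neg_one_le (D * B⁻¹)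
  rw [inv_fromBlocks_eq_of_isUnit₁₁ hB hS]
  refine (norm_add_le _ _).trans ?_
  grw [l2_opNorm_mul, l2_opNorm_mul, hcorner, hL, hR]
  linarith

end L2OpNorm

lemma l2_opNorm_transpose {m n : Type*} [Fintype m] [Fintype n] [DecidableEq m] [DecidableEq n]
    (A : Matrix m n ℝ) : ‖Aᵀ‖ = ‖A‖ := by
  rw [← conjTranspose_eq_transpose_of_trivial, l2_opNorm_conjTranspose]

end Matrix

lemma opNorm_eq_l2_opNorm {m n : Type*} [Fintype m] [Fintype n] [DecidableEq n]
    (A : Matrix m n ℝ) : opNorm A = ‖A‖ := rfl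

/-- For the block matrix `A = [[U_[k]V_[k]ᵀ, U_[k]V′ᵀ],[U′V_[k]ᵀ, M′ + U′V′ᵀ]]` with
`U_[k], V_[k], M′` invertible, the Schur complement of the top-left block is exactly
`M′`, and `sₙ(A)⁻¹ = ‖A⁻¹‖` satisfies the stated bound (with
`s_k(B)⁻¹ = ‖B⁻¹‖` and `s₁(B) = ‖B‖`). -/
theorem stmt17 {n k : ℕ} (Uk Vk : Matrix (Fin k) (Fin k) ℝ)
    (U' V' : Matrix (Fin (n - k)) (Fin k) ℝ)
    (M' : Matrix (Fin (n - k)) (Fin (n - k)) ℝ)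
    (hU : IsUnit Uk) (hV : IsUnit Vk) (hM : IsUnit M') :
    (M' + U' * V'ᵀ) - (U' * Vkᵀ) * (Uk * Vkᵀ)⁻¹ * (Uk * V'ᵀ) = M' ∧
    opNorm (Matrix.fromBlocks (Uk * Vkᵀ) (Uk * V'ᵀ) (U' * Vkᵀ) (M' + U' * V'ᵀ))⁻¹ ≤
      opNorm Uk⁻¹ * opNorm Vk⁻¹ +
        opNorm M'⁻¹ * (1 + opNorm V' * opNorm Vk⁻¹) * (1 + opNorm U' * opNorm Uk⁻¹) := by
  have hUd : IsUnit Uk.det := (isUnit_iff_isUnit_det Uk).mp hU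
  have hVtd : IsUnit Vkᵀ.det := by rwa [det_transpose, ← isUnit_iff_isUnit_det]
  have hBinv : (Uk * Vkᵀ)⁻¹ = Vkᵀ⁻¹ * Uk⁻¹ := Matrix.mul_inv_rev _ _
  have hBC : (Uk * Vkᵀ)⁻¹ * (Uk * V'ᵀ) = Vkᵀ⁻¹ * V'ᵀ := by
    rw [hBinv, Matrix.mul_assoc, nonsing_inv_mul_cancel_left _ _ hUd]
  have hDB : U' * Vkᵀ * (Uk * Vkᵀ)⁻¹ = U' * Uk⁻¹ := by
    rw [hBinv, ← Matrix.mul_assoc, mul_nonsing_inv_cancel_right _ _ hVtd]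
  have hschur : (M' + U' * V'ᵀ) - (U' * Vkᵀ) * (Uk * Vkᵀ)⁻¹ * (Uk * V'ᵀ) = M' := by
    rw [hDB, Matrix.mul_assoc, nonsing_inv_mul_cancel_left _ _ hUd, add_sub_cancel_right]
  refine ⟨hschur, ?_⟩
  have hB : IsUnit (Uk * Vkᵀ) := hU.mul ((isUnit_transpose Vk).mpr hV)
  have hbound := l2_opNorm_inv_fromBlocks_le hB (hschur ▸ hM)
  rw [hschur, hBC, hDB, hBinv] at hbound
  have hVtinv : ‖Vkᵀ⁻¹‖ = ‖Vk⁻¹‖ := by rw [← transpose_nonsing_inv, l2_opNorm_transpose]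
  simp only [opNorm_eq_l2_opNorm]
  grw [hbound, l2_opNorm_mul, l2_opNorm_mul, l2_opNorm_mul, l2_opNorm_transpose, hVtinv]
  exact (by ring : _ = _).le
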